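/- arXiv:1010.4925 — 3 statements merged into one kernel-verified Lean document; each statement's English description precedes it below -/
import Mathlib

section
/- Let n be a positive integer and let α, β ∈ 𝔽₂ⁿ be distinct nonzero vectors. Define f : 𝔽₂ⁿ → 𝔽₂ by f(x) = 1 if and only if α·x = 1 or β·x = 1 (the disjunction of the two linear functions x ↦ α·x and x ↦ β·x). Then for every triangle-free function g : 𝔽₂ⁿ → 𝔽₂, dist(f, g) ≥ 1/4. -/
open scoped BigOperators

/-- A function is triangle-free if no `x, y` have `f x = f y = f (x+y) = 1`. -/
def TriangleFree {n : ℕ} (f : (Fin n → ZMod 2) → ZMod 2) : Prop :=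
  ∀ x y : Fin n → ZMod 2, ¬ (f x = 1 ∧ f y = 1 ∧ f (x + y) = 1)

/-- The pair `(x, y)` exhibits the `(1,0,0)`-pattern for `f`:
exactly one of `f x`, `f y`, `f (x+y)` equals `1`. -/
def PatternOZZ {n : ℕ} (f : (Fin n → ZMod 2) → ZMod 2) (x y : Fin n → ZMod 2) : Prop :=
  (f x = 1 ∧ f y = 0 ∧ f (x + y) = 0) ∨
  (f x = 0 ∧ f y = 1 ∧ f (x + y) = 0) ∨
  (f x = 0 ∧ f y = 0 ∧ f (x + y) = 1)

/-- A function is `(1,0,0)`-free if no pair exhibits the `(1,0,0)`-pattern. -/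
def OZZFree {n : ℕ} (f : (Fin n → ZMod 2) → ZMod 2) : Prop :=
  ∀ x y : Fin n → ZMod 2, ¬ PatternOZZ f x y

/-- A function is linear if `f (x+y) = f x + f y` for all `x, y`. -/
def IsLinearFn {n : ℕ} (f : (Fin n → ZMod 2) → ZMod 2) : Prop :=
  ∀ x y : Fin n → ZMod 2, f (x + y) = f x + f y

/-- Fractional Hamming distance between two functions on `𝔽₂ⁿ`. -/
noncomputable def fdist {n : ℕ} (f g : (Fin n → ZMod 2) → ZMod 2) : ℝ :=
  (({x | f x ≠ g x} : Set (Fin n → ZMod 2)).ncard : ℝ) / (2 ^ n : ℝ)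

/-- Distance from a function to a set of functions (infimum of distances). -/
noncomputable def fdistSet {n : ℕ} (f : (Fin n → ZMod 2) → ZMod 2)
    (P : Set ((Fin n → ZMod 2) → ZMod 2)) : ℝ :=
  sInf (fdist f '' P)

/-- Inner product over `𝔽₂`. -/
def dotp {n : ℕ} (a x : Fin n → ZMod 2) : ZMod 2 := ∑ i, a i * x i

lemma z2_ne_zero : ∀ z : ZMod 2, z ≠ 0 → z = 1 := by decide
lemma z2_ne_one : ∀ z : ZMod 2, z ≠ 1 → z = 0 := by decide
lemma z2_cases : ∀ z : ZMod 2, z = 0 ∨ z = 1 := by decide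
lemma z2_add_self : ∀ z : ZMod 2, z + z = 0 := by decide
lemma z2_add_eq_zero : ∀ z w : ZMod 2, z + w = 0 → z = w := by decide
lemma z2_one_add_eq_one : ∀ z : ZMod 2, 1 + z = 1 → z = 0 := by decide

lemma dotp_add_right {n : ℕ} (a x y : Fin n → ZMod 2) :
    dotp a (x + y) = dotp a x + dotp a y := by
  simp [dotp, mul_add, Finset.sum_add_distrib]

lemma dotp_add_left {n : ℕ} (a b x : Fin n → ZMod 2) :
    dotp (a + b) x = dotp a x + dotp b x := by
  simp [dotp, add_mul, Finset.sum_add_distrib]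

lemma exists_dotp_one {n : ℕ} (γ : Fin n → ZMod 2) (hγ : γ ≠ 0) :
    ∃ u, dotp γ u = 1 := by
  obtain ⟨i, hi⟩ : ∃ i, γ i ≠ 0 := by
    by_contra h; push_neg at h; exact hγ (funext h)
  have h1 : γ i = 1 := z2_ne_zero _ hi
  refine ⟨Pi.single i 1, ?_⟩
  simp [dotp, Pi.single_apply, h1]

lemma add_self_vec {n : ℕ} (t : Fin n → ZMod 2) : t + t = 0 := by
  funext i; exact z2_add_self (t i)

theorem stmt_6 (n : ℕ) (hn : 0 < n) (α β : Fin n → ZMod 2)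
    (hα : α ≠ 0) (hβ : β ≠ 0) (hαβ : α ≠ β)
    (f : (Fin n → ZMod 2) → ZMod 2)
    (hf : ∀ x : Fin n → ZMod 2, f x = 1 ↔ (dotp α x = 1 ∨ dotp β x = 1))
    (g : (Fin n → ZMod 2) → ZMod 2) (hg : TriangleFree g) :
    1 / 4 ≤ fdist f g := by
  classical
  -- representatives of the four classes
  have hαβ0 : α + β ≠ 0 := by
    intro h
    exact hαβ (funext fun i => z2_add_eq_zero _ _ (congrFun h i))
  obtain ⟨w, hw⟩ := exists_dotp_one (α + β) hαβ0
  rw [dotp_add_left] at hw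
  obtain ⟨u, hu⟩ := exists_dotp_one α hα
  obtain ⟨v, hv⟩ := exists_dotp_one β hβ
  obtain ⟨p, q, hp1, hp2, hq1, hq2⟩ :
      ∃ p q : Fin n → ZMod 2,
        dotp α p = 1 ∧ dotp β p = 0 ∧ dotp α q = 0 ∧ dotp β q = 1 := by
    rcases z2_cases (dotp α w) with h0 | h1
    · have hbw : dotp β w = 1 := by rwa [h0, zero_add] at hw
      rcases z2_cases (dotp β u) with hbu | hbu
      · exact ⟨u, w, hu, hbu, h0, hbw⟩
      · refine ⟨u + w, w, ?_, ?_, h0, hbw⟩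
        · rw [dotp_add_right, hu, h0, add_zero]
        · rw [dotp_add_right, hbu, hbw]; decide
    · have hbw : dotp β w = 0 := by rw [h1] at hw; exact z2_one_add_eq_one _ hw
      rcases z2_cases (dotp α v) with hav | hav
      · exact ⟨w, v, h1, hbw, hav, hv⟩
      · refine ⟨w, v + w, h1, hbw, ?_, ?_⟩
        · rw [dotp_add_right, hav, h1]; decide
        · rw [dotp_add_right, hv, hbw, add_zero]
  -- the four classes
  set S : ZMod 2 → ZMod 2 → Finset (Fin n → ZMod 2) :=
    fun c d => Finset.univ.filter (fun x => dotp α x = c ∧ dotp β x = d) with hS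
  have memS : ∀ c d x, x ∈ S c d ↔ (dotp α x = c ∧ dotp β x = d) := by
    intro c d x; simp [hS]
  -- translation invariance
  have htrans : ∀ (t : Fin n → ZMod 2) (c d : ZMod 2),
      (S c d).card = (S (c + dotp α t) (d + dotp β t)).card := by
    intro t c d
    apply Finset.card_nbij' (i := (· + t)) (j := (· + t))
    · intro x hx
      simp only [Finset.mem_coe] at hx ⊢; rw [memS] at hx ⊢
      obtain ⟨h1, h2⟩ := hx
      constructor
      · rw [dotp_add_right, h1]
      · rw [dotp_add_right, h2]
    · intro x hx
      simp only [Finset.mem_coe] at hx ⊢; rw [memS] at hx ⊢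
      obtain ⟨h1, h2⟩ := hx
      constructor
      · rw [dotp_add_right, h1, add_assoc, z2_add_self, add_zero]
      · rw [dotp_add_right, h2, add_assoc, z2_add_self, add_zero]
    · intro x _; show x + t + t = x; rw [add_assoc, add_self_vec, add_zero]
    · intro x _; show x + t + t = x; rw [add_assoc, add_self_vec, add_zero]
  set m := (S 0 1).card with hm
  have hmq : q ∈ S 0 1 := (memS 0 1 q).2 ⟨hq1, hq2⟩
  have hm_pos : 0 < m := Finset.card_pos.2 ⟨q, hmq⟩
  -- all classes have the same cardinality m
  have apq : dotp α (p + q) = 1 := by rw [dotp_add_right, hp1, hq1, add_zero]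
  have bpq : dotp β (p + q) = 1 := by rw [dotp_add_right, hp2, hq2, zero_add]
  have e10 : (S 1 0).card = m := by
    have h := htrans (p + q) 0 1
    rw [apq, bpq] at h
    have h1 : (0 + 1 : ZMod 2) = 1 := by decide
    have h2 : (1 + 1 : ZMod 2) = 0 := by decide
    rw [h1, h2] at h
    exact h.symm
  have e00 : (S 0 0).card = m := by
    have h := htrans q 0 0
    rw [hq1, hq2, add_zero, zero_add] at h
    exact h
  have e11 : (S 1 1).card = m := by
    have h := htrans p 0 1
    rw [hp1, hp2, zero_add, add_zero] at h
    rw [← h, hm]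
  -- partition: 2^n = 4m
  have hcardU : (Finset.univ : Finset (Fin n → ZMod 2)).card = 2 ^ n := by
    simp [Fintype.card_fun]
  have hsum : (Finset.univ : Finset (Fin n → ZMod 2)).card
      = ∑ c : ZMod 2 × ZMod 2,
          (Finset.univ.filter fun x => (dotp α x, dotp β x) = c).card :=
    Finset.card_eq_sum_card_fiberwise (fun x _ => Finset.mem_univ _)
  have hfib : ∀ c d : ZMod 2,
      (Finset.univ.filter fun x => (dotp α x, dotp β x) = (c, d)) = S c d := by
    intro c d
    apply Finset.filter_congr
    intro x _
    simp [Prod.ext_iff]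
  have hU : (Finset.univ : Finset (ZMod 2 × ZMod 2)) = {(0,0),(0,1),(1,0),(1,1)} := by
    decide
  have h4m : 2 ^ n = 4 * m := by
    rw [← hcardU, hsum, hU]
    rw [show ({(0,0),(0,1),(1,0),(1,1)} : Finset (ZMod 2 × ZMod 2))
        = insert (0,0) (insert (0,1) (insert (1,0) {(1,1)})) from rfl]
    rw [Finset.sum_insert (by decide), Finset.sum_insert (by decide),
        Finset.sum_insert (by decide), Finset.sum_singleton]
    rw [hfib 0 0, hfib 0 1, hfib 1 0, hfib 1 1, e00, e10, e11, ← hm]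
    ring
  -- the disagreement set
  set D : Finset (Fin n → ZMod 2) :=
    Finset.univ.filter (fun z => f z = 1 ∧ g z = 0) with hD
  have memD : ∀ z, z ∈ D ↔ (f z = 1 ∧ g z = 0) := by intro z; simp [hD]
  -- the witness map
  set Ψ : (Fin n → ZMod 2) × (Fin n → ZMod 2) → (Fin n → ZMod 2) :=
    fun pr => if g pr.1 = 0 then pr.1 else if g pr.2 = 0 then pr.2 else pr.1 + pr.2 with hΨ
  have maps_to : ∀ pr ∈ S 0 1 ×ˢ S 1 0, Ψ pr ∈ D := by
    rintro ⟨x, y⟩ hpr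
    rw [Finset.mem_product] at hpr
    obtain ⟨hx, hy⟩ := hpr
    rw [memS] at hx hy
    have hfx : f x = 1 := (hf x).2 (Or.inr hx.2)
    have hfy : f y = 1 := (hf y).2 (Or.inl hy.1)
    have hfxy : f (x + y) = 1 := by
      refine (hf _).2 (Or.inl ?_)
      rw [dotp_add_right, hx.1, hy.1, zero_add]
    simp only [hΨ]
    by_cases h1 : g x = 0
    · simp only [h1, if_pos]
      exact (memD x).2 ⟨hfx, h1⟩
    · by_cases h2 : g y = 0
      · simp only [h1, h2, if_neg, if_pos, if_true]
        exact (memD y).2 ⟨hfy, h2⟩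
      · simp only [h1, h2, if_neg]
        have hgx : g x = 1 := z2_ne_zero _ h1
        have hgy : g y = 1 := z2_ne_zero _ h2
        have hgxy : g (x + y) = 0 := by
          apply z2_ne_one
          intro hc
          exact hg x y ⟨hgx, hgy, hc⟩
        exact (memD _).2 ⟨hfxy, hgxy⟩
  -- fiber bound
  have fiber_facts : ∀ z, ∀ pr ∈ (S 0 1 ×ˢ S 1 0).filter (fun pr => Ψ pr = z),
      (dotp α pr.1 = 0 ∧ dotp β pr.1 = 1) ∧ (dotp α pr.2 = 1 ∧ dotp β pr.2 = 0) ∧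
      (z = pr.1 ∨ z = pr.2 ∨ z = pr.1 + pr.2) := by
    rintro z ⟨x, y⟩ hpr
    rw [Finset.mem_filter, Finset.mem_product] at hpr
    obtain ⟨⟨hx, hy⟩, hψ⟩ := hpr
    rw [memS] at hx hy
    refine ⟨hx, hy, ?_⟩
    simp only [hΨ] at hψ
    split_ifs at hψ
    · exact Or.inl hψ.symm
    · exact Or.inr (Or.inl hψ.symm)
    · exact Or.inr (Or.inr hψ.symm)
  have fiber_bound : ∀ z ∈ D,
      ((S 0 1 ×ˢ S 1 0).filter (fun pr => Ψ pr = z)).card ≤ m := by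
    intro z hz
    rw [memD] at hz
    have hfz : dotp α z = 1 ∨ dotp β z = 1 := (hf z).1 hz.1
    rcases z2_cases (dotp α z) with haz | haz
    · -- a z = 0 : z must be the first coordinate
      have hzfst : ∀ pr ∈ (S 0 1 ×ˢ S 1 0).filter (fun pr => Ψ pr = z), z = pr.1 := by
        intro pr hpr
        obtain ⟨hx, hy, hcase⟩ := fiber_facts z pr hpr
        rcases hcase with h | h | h
        · exact h
        · rw [h, hy.1] at haz; exact absurd haz (by decide)
        · rw [h, dotp_add_right, hx.1, hy.1, zero_add] at haz
          exact absurd haz (by decide)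
      calc ((S 0 1 ×ˢ S 1 0).filter (fun pr => Ψ pr = z)).card
          ≤ (S 1 0).card := by
            apply Finset.card_le_card_of_injOn Prod.snd
            · intro pr hpr
              have := (Finset.mem_filter.1 hpr).1
              exact (Finset.mem_product.1 this).2
            · intro pr hpr pr' hpr' hsnd
              have h1 := hzfst pr hpr
              have h2 := hzfst pr' hpr'
              exact Prod.ext (h1 ▸ h2) hsnd
        _ = m := e10
    · rcases z2_cases (dotp β z) with hbz | hbz
      · -- a z = 1, b z = 0 : z must be the second coordinate
        have hzsnd : ∀ pr ∈ (S 0 1 ×ˢ S 1 0).filter (fun pr => Ψ pr = z), z = pr.2 := by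
          intro pr hpr
          obtain ⟨hx, hy, hcase⟩ := fiber_facts z pr hpr
          rcases hcase with h | h | h
          · rw [h, hx.2] at hbz; exact absurd hbz (by decide)
          · exact h
          · rw [h, dotp_add_right, hx.2, hy.2, add_zero] at hbz
            exact absurd hbz (by decide)
        calc ((S 0 1 ×ˢ S 1 0).filter (fun pr => Ψ pr = z)).card
            ≤ (S 0 1).card := by
              apply Finset.card_le_card_of_injOn Prod.fst
              · intro pr hpr
                have := (Finset.mem_filter.1 hpr).1
                exact (Finset.mem_product.1 this).1
              · intro pr hpr pr' hpr' hfst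
                have h1 := hzsnd pr hpr
                have h2 := hzsnd pr' hpr'
                exact Prod.ext hfst (h1 ▸ h2)
          _ = m := hm.symm
      · -- a z = 1, b z = 1 : z must be the sum
        have hzsum : ∀ pr ∈ (S 0 1 ×ˢ S 1 0).filter (fun pr => Ψ pr = z),
            pr.2 = pr.1 + z := by
          intro pr hpr
          obtain ⟨hx, hy, hcase⟩ := fiber_facts z pr hpr
          rcases hcase with h | h | h
          · rw [h, hx.1] at haz; exact absurd haz (by decide)
          · rw [h, hy.2] at hbz; exact absurd hbz (by decide)
          · rw [h, ← add_assoc, add_self_vec, zero_add]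
        calc ((S 0 1 ×ˢ S 1 0).filter (fun pr => Ψ pr = z)).card
            ≤ (S 0 1).card := by
              apply Finset.card_le_card_of_injOn Prod.fst
              · intro pr hpr
                have := (Finset.mem_filter.1 hpr).1
                exact (Finset.mem_product.1 this).1
              · intro pr hpr pr' hpr' hfst
                have h1 := hzsum pr hpr
                have h2 := hzsum pr' hpr'
                refine Prod.ext hfst ?_
                rw [h1, h2, hfst]
          _ = m := hm.symm
  -- counting
  have hmD : m ≤ D.card := by
    have hkey : (S 0 1 ×ˢ S 1 0).card ≤ m * D.card :=
      Finset.card_le_mul_card_image_of_maps_to maps_to m fiber_bound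
    rw [Finset.card_product, e10, ← hm] at hkey
    exact Nat.le_of_mul_le_mul_left hkey hm_pos
  -- conclude
  have hsub : D ⊆ Finset.univ.filter (fun x => f x ≠ g x) := by
    intro z hz
    rw [memD] at hz
    rw [Finset.mem_filter]
    refine ⟨Finset.mem_univ _, ?_⟩
    rw [hz.1, hz.2]
    exact one_ne_zero
  have hT : ({x | f x ≠ g x} : Set (Fin n → ZMod 2)).ncard
      = (Finset.univ.filter (fun x => f x ≠ g x)).card := by
    rw [show ({x | f x ≠ g x} : Set (Fin n → ZMod 2))
        = ((Finset.univ.filter (fun x => f x ≠ g x) : Finset (Fin n → ZMod 2)) : Set (Fin n → ZMod 2)) from by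
      ext z; simp]
    exact Set.ncard_coe_finset _
  have hmcard : m ≤ (Finset.univ.filter (fun x => f x ≠ g x)).card :=
    le_trans hmD (Finset.card_le_card hsub)
  rw [fdist, hT]
  rw [div_le_div_iff₀ (by norm_num) (by positivity)]
  have h2n : ((2 : ℝ)) ^ n = 4 * (m : ℝ) := by exact_mod_cast h4m
  have hc : (m : ℝ) ≤ ((Finset.univ.filter (fun x => f x ≠ g x)).card : ℝ) := by
    exact_mod_cast hmcard
  rw [one_mul, h2n]
  linarith
end

section
/- Let n be a positive integer and let f : 𝔽₂ⁿ → 𝔽₂ be a function that is (1,0,0)-free and not linear. Then for every function h : 𝔽₂ⁿ → 𝔽₂ that is triangle-free and not linear, dist(f, h) ≥ 1/4. (In fact, dist(f, h) ≥ 1/4 holds for every triangle-free h.) -/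
open scoped BigOperators

lemma zmod2_cases : ∀ c : ZMod 2, c = 0 ∨ c = 1 := by decide

lemma zmod2_add_self : ∀ c : ZMod 2, c + c = 0 := by decide

lemma vadd_self {n : ℕ} (v : Fin n → ZMod 2) : v + v = 0 := by
  funext i
  simp only [Pi.add_apply, Pi.zero_apply]
  exact zmod2_add_self (v i)

theorem stmt_10 (n : ℕ) (hn : 0 < n) (f : (Fin n → ZMod 2) → ZMod 2)
    (hf : OZZFree f) (hfl : ¬ IsLinearFn f)
    (h : (Fin n → ZMod 2) → ZMod 2)
    (hh : TriangleFree h) (hhl : ¬ IsLinearFn h) :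
    1 / 4 ≤ fdist f h := by
  classical
  have hcard : Fintype.card (Fin n → ZMod 2) = 2 ^ n := by
    simp [Fintype.card_fun]
  set T : Finset (Fin n → ZMod 2) := Finset.univ.filter (fun x => f x = 0) with hTdef
  set S : Finset (Fin n → ZMod 2) := Finset.univ.filter (fun x => f x = 1) with hSdef
  set H : Finset (Fin n → ZMod 2) := Finset.univ.filter (fun x => h x = 1) with hHdef
  set M : Finset (Fin n → ZMod 2) := Finset.univ.filter (fun x => f x ≠ h x) with hMdef
  -- S and T partition
  have hST : T.card + S.card = 2 ^ n := by
    have := Finset.card_filter_add_card_filter_not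
      (s := (Finset.univ : Finset (Fin n → ZMod 2))) (p := fun x => f x = 0)
    rw [Finset.card_univ, hcard] at this
    have hSeq : Finset.univ.filter (fun x => ¬ f x = 0) = S := by
      rw [hSdef]
      apply Finset.filter_congr
      intro x _
      rcases zmod2_cases (f x) with h0 | h0 <;> simp [h0]
    rwa [hSeq] at this
  -- bound on T : 4 * T.card ≤ 2 ^ n
  have hT4 : 4 * T.card ≤ 2 ^ n := by
    rcases zmod2_cases (f 0) with hf0 | hf0
    · -- f 0 = 0 : T closed under addition
      have hclosed : ∀ x y : Fin n → ZMod 2, f x = 0 → f y = 0 → f (x + y) = 0 := by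
        intro x y hx hy
        rcases zmod2_cases (f (x + y)) with h0 | h1
        · exact h0
        · exact absurd (Or.inr (Or.inr ⟨hx, hy, h1⟩)) (hf x y)
      -- nonlinearity gives a triangle in S
      obtain ⟨a, b, hab⟩ : ∃ a b : Fin n → ZMod 2, f (a + b) ≠ f a + f b := by
        by_contra hc
        push_neg at hc
        exact hfl fun x y => hc x y
      have htri : f a = 1 ∧ f b = 1 ∧ f (a + b) = 1 := by
        have hfab := hf a b
        simp only [PatternOZZ] at hfab
        rcases zmod2_cases (f a) with ha | ha <;>
          rcases zmod2_cases (f b) with hb | hb <;>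
          rcases zmod2_cases (f (a + b)) with hab' | hab' <;>
          rw [ha, hb, hab'] at hfab hab <;> first
            | (exact absurd rfl hab)
            | (exact absurd (by decide) hab)
            | (exact ⟨ha, hb, hab'⟩)
            | (exact absurd (by tauto) hfab)
      obtain ⟨ha1, hb1, hc1⟩ := htri
      -- four disjoint translates of T
      have himg : ∀ u : Fin n → ZMod 2, (T.image (fun t => u + t)).card = T.card :=
        fun u => Finset.card_image_of_injective _ (add_right_injective u)
      have hdisj : ∀ u v : Fin n → ZMod 2, f (u + v) = 1 →
          Disjoint (T.image (fun t => u + t)) (T.image (fun t => v + t)) := by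
        intro u v huv
        rw [Finset.disjoint_left]
        rintro x hxu hxv
        obtain ⟨t, ht, rfl⟩ := Finset.mem_image.mp hxu
        obtain ⟨t', ht', heq⟩ := Finset.mem_image.mp hxv
        simp only [hTdef, Finset.mem_filter, Finset.mem_univ, true_and] at ht ht'
        have e1 : u + v = (u + t) + (v + t) := by
          rw [show (u + t) + (v + t) = (u + v) + (t + t) by ring, vadd_self, add_zero]
        have e2 : (v + t') + (v + t) = t' + t := by
          rw [show (v + t') + (v + t) = (t' + t) + (v + v) by ring, vadd_self, add_zero]
        have huvtt : u + v = t' + t := by rw [e1, ← heq, e2]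
        have hin : f (u + v) = 0 := by rw [huvtt]; exact hclosed t' t ht' ht
        rw [hin] at huv
        exact absurd huv (by decide)
      have hT0 : T.image (fun t => (0 : Fin n → ZMod 2) + t) = T := by
        simp
      have hfa : f ((0 : Fin n → ZMod 2) + a) = 1 := by rw [zero_add]; exact ha1
      have hfb : f ((0 : Fin n → ZMod 2) + b) = 1 := by rw [zero_add]; exact hb1
      have hfc : f ((0 : Fin n → ZMod 2) + (a + b)) = 1 := by rw [zero_add]; exact hc1
      have hfac : f (a + (a + b)) = 1 := by
        rw [show a + (a + b) = b + (a + a) by ring, vadd_self, add_zero]; exact hb1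
      have hfbc : f (b + (a + b)) = 1 := by
        rw [show b + (a + b) = a + (b + b) by ring, vadd_self, add_zero]; exact ha1
      set A := T.image (fun t => a + t) with hA
      set B := T.image (fun t => b + t) with hB
      set C := T.image (fun t => (a + b) + t) with hC
      have d1 : Disjoint T A := by rw [← hT0]; exact hdisj 0 a hfa
      have d2 : Disjoint T B := by rw [← hT0]; exact hdisj 0 b hfb
      have d3 : Disjoint T C := by rw [← hT0]; exact hdisj 0 (a + b) hfc
      have d4 : Disjoint A B := hdisj a b hc1
      have d5 : Disjoint A C := hdisj a (a + b) hfac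
      have d6 : Disjoint B C := hdisj b (a + b) hfbc
      have hcardU : (T ∪ A ∪ B ∪ C).card = 4 * T.card := by
        rw [Finset.card_union_of_disjoint
              (Finset.disjoint_union_left.mpr ⟨Finset.disjoint_union_left.mpr ⟨d3, d5⟩, d6⟩),
            Finset.card_union_of_disjoint (Finset.disjoint_union_left.mpr ⟨d2, d4⟩),
            Finset.card_union_of_disjoint d1, hA, hB, hC, himg, himg, himg]
        ring
      calc 4 * T.card = (T ∪ A ∪ B ∪ C).card := hcardU.symm
        _ ≤ Fintype.card (Fin n → ZMod 2) := Finset.card_le_univ _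
        _ = 2 ^ n := hcard
    · -- f 0 = 1 : f is identically 1, T empty
      have hTe : T = ∅ := by
        rw [Finset.eq_empty_iff_forall_notMem]
        intro y hy
        simp only [hTdef, Finset.mem_filter, Finset.mem_univ, true_and] at hy
        exact hf 0 y (Or.inl ⟨hf0, hy, by rw [zero_add]; exact hy⟩)
      rw [hTe]
      simp
  -- bound on H : 2 * H.card ≤ 2 ^ n
  have hH2 : 2 * H.card ≤ 2 ^ n := by
    rcases H.eq_empty_or_nonempty with hE | ⟨s, hs⟩
    · rw [hE]
      simp
    · have hs1 : h s = 1 := by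
        rw [hHdef] at hs
        simpa using hs
      have hd : Disjoint H (H.image (fun t => s + t)) := by
        rw [Finset.disjoint_left]
        rintro x hx hx'
        obtain ⟨t, ht, rfl⟩ := Finset.mem_image.mp hx'
        simp only [hHdef, Finset.mem_filter, Finset.mem_univ, true_and] at hx ht
        exact hh s t ⟨hs1, ht, hx⟩
      have himg : (H.image (fun t => s + t)).card = H.card :=
        Finset.card_image_of_injective _ (add_right_injective s)
      calc 2 * H.card = (H ∪ H.image (fun t => s + t)).card := by
            rw [Finset.card_union_of_disjoint hd, himg]; ring
        _ ≤ Fintype.card (Fin n → ZMod 2) := Finset.card_le_univ _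
        _ = 2 ^ n := hcard
  -- S \ H ⊆ M
  have hsub : S \ H ⊆ M := by
    intro x hx
    simp only [hSdef, hHdef, hMdef, Finset.mem_sdiff, Finset.mem_filter, Finset.mem_univ,
      true_and] at hx ⊢
    obtain ⟨hfx, hhx⟩ := hx
    rcases zmod2_cases (h x) with h0 | h1
    · rw [hfx, h0]; decide
    · exact absurd h1 hhx
  have hMcard : S.card ≤ M.card + H.card := by
    calc S.card ≤ ((S \ H) ∪ H).card := Finset.card_le_card (by
          intro x hx
          by_cases hxH : x ∈ H
          · exact Finset.mem_union_right _ hxH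
          · exact Finset.mem_union_left _ (Finset.mem_sdiff.mpr ⟨hx, hxH⟩))
      _ ≤ (S \ H).card + H.card := Finset.card_union_le _ _
      _ ≤ M.card + H.card := Nat.add_le_add_right (Finset.card_le_card hsub) _
  -- conclude : 2 ^ n ≤ 4 * M.card
  have hfin : 2 ^ n ≤ 4 * M.card := by omega
  -- translate to fdist
  have hncard : ({x | f x ≠ h x} : Set (Fin n → ZMod 2)).ncard = M.card := by
    rw [Set.ncard_eq_toFinset_card']
    congr 1
    ext x
    simp [hMdef]
  rw [fdist, hncard]
  rw [div_le_div_iff₀ (by norm_num) (by positivity)]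
  have hc : (2 : ℝ) ^ n ≤ 4 * (M.card : ℝ) := by exact_mod_cast hfin
  linarith
end

section
/- Let k be a positive integer, let F be the finite field with 2^k elements, and let φ : F → 𝔽₂^k be an 𝔽₂-linear bijection. Let p, q ∈ F[X] be polynomials with deg(p) ≤ 2^(k−1) − 1 and deg(q) = 2^(k−1). Then the number of pairs (x, y) ∈ F × 𝔽₂^k with φ(p(x))·y ≠ φ(q(x))·y is at least 2^(2k−2); equivalently, the functions (x,y) ↦ φ(p(x))·y and (x,y) ↦ φ(q(x))·y disagree on at least a 1/4 fraction of F × 𝔽₂^k. -/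
open scoped BigOperators

lemma dotp_sub_left {n : ℕ} (a b x : Fin n → ZMod 2) :
    dotp (a - b) x = dotp a x - dotp b x := by
  simp [dotp, sub_mul, Finset.sum_sub_distrib]

lemma zmod2_ne_iff : ∀ a b : ZMod 2, (a ≠ b ↔ b - a = 1) := by decide

lemma zmod2_ne_zero : ∀ a : ZMod 2, a ≠ 0 → a = 1 := by decide

lemma card_dotp_one {k : ℕ} (a : Fin k → ZMod 2) (ha : a ≠ 0) :
    (Finset.univ.filter fun y => dotp a y = 1).card = 2 ^ (k - 1) := by
  obtain ⟨i, hi⟩ := Function.ne_iff.mp ha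
  have hai : a i = 1 := zmod2_ne_zero _ hi
  set e : Fin k → ZMod 2 := Pi.single i 1 with he
  have key : ∀ y, dotp a (y + e) = dotp a y + 1 := by
    intro y
    have h1 : dotp a e = 1 := by
      rw [dotp]
      rw [Fintype.sum_eq_single i (fun j hj => by simp [he, Pi.single_eq_of_ne hj])]
      simp [he, hai]
    simp only [dotp, Pi.add_apply, mul_add, Finset.sum_add_distrib]
    rw [← dotp, ← dotp, h1]
  have hswap : (Finset.univ.filter fun y => dotp a y = 1).card
      = (Finset.univ.filter fun y => ¬ dotp a y = 1).card := by
    apply Finset.card_nbij' (fun y => y + e) (fun y => y + e)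
    · intro y hy
      simp only [Finset.mem_coe, Finset.mem_filter, Finset.mem_univ, true_and] at hy ⊢
      rw [key, hy]; decide
    · intro y hy
      simp only [Finset.mem_coe, Finset.mem_filter, Finset.mem_univ, true_and] at hy ⊢
      rw [key]
      revert hy; generalize dotp a y = z; revert z; decide
    · intro y _
      have hee : e + e = 0 := by
        ext j
        by_cases hji : j = i
        · subst hji; simp [he, Pi.single_eq_same]; decide
        · simp [he, Pi.single_eq_of_ne hji]
      dsimp only; rw [add_assoc, hee, add_zero]
    · intro y _
      have hee : e + e = 0 := by
        ext j
        by_cases hji : j = i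
        · subst hji; simp [he, Pi.single_eq_same]; decide
        · simp [he, Pi.single_eq_of_ne hji]
      dsimp only; rw [add_assoc, hee, add_zero]
  have htot := Finset.card_filter_add_card_filter_not
    (s := (Finset.univ : Finset (Fin k → ZMod 2))) (p := fun y => dotp a y = 1)
  rw [← hswap] at htot
  have hcardU : (Finset.univ : Finset (Fin k → ZMod 2)).card = 2 ^ k := by
    simp [Finset.card_univ]
  have hk1 : 1 ≤ k := i.pos
  have h2k : 2 ^ k = 2 ^ (k - 1) + 2 ^ (k - 1) := by
    rw [← two_mul, ← pow_succ']
    congr 1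
    omega
  omega

theorem stmt_15 (k : ℕ) (hk : 0 < k) (F : Type) [Field F] [Fintype F]
    [Algebra (ZMod 2) F] (hcard : Fintype.card F = 2 ^ k)
    (φ : F ≃ₗ[ZMod 2] (Fin k → ZMod 2))
    (p q : Polynomial F)
    (hp : p.natDegree ≤ 2 ^ (k - 1) - 1)
    (hq : q.natDegree = 2 ^ (k - 1)) :
    2 ^ (2 * k - 2) ≤
      ({pr : F × (Fin k → ZMod 2) |
        dotp (φ (p.eval pr.1)) pr.2 ≠ dotp (φ (q.eval pr.1)) pr.2} : Set _).ncard := by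
  classical
  set r : Polynomial F := q - p with hr
  have h1le : 1 ≤ 2 ^ (k - 1) := Nat.one_le_two_pow
  have hplt : p.natDegree < q.natDegree := by rw [hq]; omega
  have hrdeg : r.natDegree = 2 ^ (k - 1) := by
    rw [hr, Polynomial.natDegree_sub_eq_left_of_natDegree_lt hplt, hq]
  have hrne : r ≠ 0 := by
    intro h; rw [h, Polynomial.natDegree_zero] at hrdeg; omega
  set T : Finset (F × (Fin k → ZMod 2)) :=
    Finset.univ.filter fun pr => dotp (φ (r.eval pr.1)) pr.2 = 1 with hT
  have hset : ({pr : F × (Fin k → ZMod 2) |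
      dotp (φ (p.eval pr.1)) pr.2 ≠ dotp (φ (q.eval pr.1)) pr.2} : Set _) = ↑T := by
    ext pr
    simp only [Set.mem_setOf_eq, hT, Finset.coe_filter, Finset.mem_univ, true_and]
    rw [zmod2_ne_iff]
    have hφ : φ (r.eval pr.1) = φ (q.eval pr.1) - φ (p.eval pr.1) := by
      rw [hr]; simp [map_sub]
    rw [hφ, dotp_sub_left]
  rw [hset, Set.ncard_coe_finset]
  have hcount : T.card = ∑ x : F,
      (Finset.univ.filter fun y => dotp (φ (r.eval x)) y = 1).card := by
    rw [hT, Finset.card_filter, ← Finset.univ_product_univ, Finset.sum_product]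
    exact Finset.sum_congr rfl fun x _ => (Finset.card_filter _ _).symm
  rw [hcount]
  set N : Finset F := Finset.univ.filter fun x => ¬ r.eval x = 0 with hN
  have hNcard : 2 ^ (k - 1) ≤ N.card := by
    have hZ : (Finset.univ.filter fun x => r.eval x = 0).card ≤ 2 ^ (k - 1) := by
      calc (Finset.univ.filter fun x => r.eval x = 0).card
          ≤ r.roots.toFinset.card := Finset.card_le_card (by
            intro x hx
            simp only [Finset.mem_filter, Finset.mem_univ, true_and] at hx
            simp [Multiset.mem_toFinset, Polynomial.mem_roots, hrne, hx,
              Polynomial.IsRoot])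
        _ ≤ Multiset.card r.roots := r.roots.toFinset_card_le
        _ ≤ r.natDegree := r.card_roots'
        _ = 2 ^ (k - 1) := hrdeg
    have htot := Finset.card_filter_add_card_filter_not
      (s := (Finset.univ : Finset F)) (p := fun x => r.eval x = 0)
    rw [Finset.card_univ, hcard] at htot
    have h2k : 2 ^ k = 2 ^ (k - 1) + 2 ^ (k - 1) := by
      rw [← two_mul, ← pow_succ']; congr 1; omega
    simp only [hN, Finset.filter_congr_decidable] at htot hZ ⊢
    omega
  calc (2:ℕ) ^ (2 * k - 2) = 2 ^ (k - 1) * 2 ^ (k - 1) := by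
        rw [← pow_add]; congr 1; omega
    _ ≤ N.card * 2 ^ (k - 1) := Nat.mul_le_mul_right _ hNcard
    _ = ∑ _x ∈ N, 2 ^ (k - 1) := by rw [Finset.sum_const, smul_eq_mul]
    _ = ∑ x ∈ N, (Finset.univ.filter fun y => dotp (φ (r.eval x)) y = 1).card := by
        apply Finset.sum_congr rfl
        intro x hx
        simp only [hN, Finset.mem_filter, Finset.mem_univ, true_and] at hx
        refine (card_dotp_one _ ?_).symm
        intro h0
        exact hx (by simpa using φ.map_eq_zero_iff.mp h0)
    _ ≤ ∑ x : F, (Finset.univ.filter fun y => dotp (φ (r.eval x)) y = 1).card :=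
        Finset.sum_le_sum_of_subset (Finset.subset_univ N)
end
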